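/- Let F be a finite field whose characteristic is not 3, and let F₀, F₁, F₂, F₃ ∈ MvPolynomial (Fin 3) F be homogeneous polynomials of degree 3 that are linearly independent over F. Then there exists a nonzero tuple (a₀,a₁,a₂,a₃) ∈ F⁴ such that the plane cubic f = a₀•F₀ + a₁•F₁ + a₂•F₂ + a₃•F₃ has a singular point: there exists (u₀,u₁,u₂) ∈ (AlgebraicClosure F)³ with (u₀,u₁,u₂) ≠ (0,0,0) at which the image f̄ of f in MvPolynomial (Fin 3) (AlgebraicClosure F) evaluates to 0 and all three partial derivatives MvPolynomial.pderiv i f̄ (i = 0,1,2) evaluate to 0. -/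

import Mathlib

/-!
Fix the point `v = (1 : 0 : 0)`. The gradient at `v` of `∑ aⱼ Fⱼ` depends linearly on
`a ∈ F⁴` and takes values in `F³`, so it vanishes for some `a ≠ 0`. By Euler's identity
`∑ xᵢ ∂ᵢf = 3 f`, a cubic whose gradient vanishes at `v` also vanishes at `v` once `3 ≠ 0`,
so `v` is a singular point of that member of the linear system.
-/

open MvPolynomial

protected lemma Ring.three_ne_zero {R : Type*} [NonAssocSemiring R] [Nontrivial R]
    (hR : ringChar R ≠ 3) : (3 : R) ≠ 0 := by
  rw [Ne, (by norm_cast : (3 : R) = (3 : ℕ)), ringChar.spec, Nat.dvd_prime Nat.prime_three]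
  exact mt (or_iff_left hR).mp CharP.ringChar_ne_one

namespace MvPolynomial

theorem IsHomogeneous.eval_eq_zero_of_eval_pderiv_eq_zero {R σ : Type*} [CommSemiring R]
    [NoZeroDivisors R] [Fintype σ] {n : ℕ} {f : MvPolynomial σ R} (hf : f.IsHomogeneous n)
    (hn : (n : R) ≠ 0) {u : σ → R} (hu : ∀ i, eval u (pderiv i f) = 0) : eval u f = 0 := by
  have euler := congrArg (eval u) hf.sum_X_mul_pderiv
  simp only [map_sum, map_mul, hu, mul_zero, Finset.sum_const_zero, nsmul_eq_mul,
    map_natCast] at euler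
  exact (mul_eq_zero.mp euler.symm).resolve_left hn

theorem exists_ne_zero_eval_pderiv_sum_smul_eq_zero {K σ ι : Type*} [Field K] [Fintype σ]
    [Fintype ι] (hcard : Fintype.card σ < Fintype.card ι) (P : ι → MvPolynomial σ K)
    (v : σ → K) : ∃ a : ι → K, a ≠ 0 ∧ ∀ i, eval v (pderiv i (∑ j, a j • P j)) = 0 := by
  let gradAt : (ι → K) →ₗ[K] (σ → K) := LinearMap.pi fun i =>
    (aeval v).toLinearMap ∘ₗ (pderiv i).toLinearMap ∘ₗ Fintype.linearCombination K P
  obtain ⟨a, ha, ha0⟩ :=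
    (Submodule.ne_bot_iff _).mp (gradAt.ker_ne_bot_of_finrank_lt (by simpa using hcard))
  refine ⟨a, ha0, fun i => ?_⟩
  simpa [gradAt, Fintype.linearCombination_apply, coe_aeval_eq_eval] using
    congrFun (LinearMap.mem_ker.mp ha) i

theorem eval_comp_map {R S σ : Type*} [CommSemiring R] [CommSemiring S] (φ : R →+* S)
    (v : σ → R) (p : MvPolynomial σ R) : eval (φ ∘ v) (map φ p) = φ (eval v p) := by
  rw [eval_map, eval₂_comp]

end MvPolynomial

theorem stmt_11 (F : Type*) [Field F] (hchar : ringChar F ≠ 3)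
    (F₀ F₁ F₂ F₃ : MvPolynomial (Fin 3) F)
    (h₀ : F₀.IsHomogeneous 3) (h₁ : F₁.IsHomogeneous 3)
    (h₂ : F₂.IsHomogeneous 3) (h₃ : F₃.IsHomogeneous 3) :
    ∃ a : Fin 4 → F, a ≠ 0 ∧
      ∃ u : Fin 3 → AlgebraicClosure F, u ≠ 0 ∧
        MvPolynomial.eval u (MvPolynomial.map (algebraMap F (AlgebraicClosure F))
          (a 0 • F₀ + a 1 • F₁ + a 2 • F₂ + a 3 • F₃)) = 0 ∧
        ∀ i : Fin 3, MvPolynomial.eval u (MvPolynomial.pderiv i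
          (MvPolynomial.map (algebraMap F (AlgebraicClosure F))
            (a 0 • F₀ + a 1 • F₁ + a 2 • F₂ + a 3 • F₃))) = 0 := by
  set φ := algebraMap F (AlgebraicClosure F)
  let v : Fin 3 → F := Pi.single 0 1
  obtain ⟨a, ha0, hgrad⟩ :=
    exists_ne_zero_eval_pderiv_sum_smul_eq_zero (by simp) ![F₀, F₁, F₂, F₃] v
  set f := a 0 • F₀ + a 1 • F₁ + a 2 • F₂ + a 3 • F₃
  have hsum : ∑ j, a j • ![F₀, F₁, F₂, F₃] j = f := by simp [f, Fin.sum_univ_four]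
  rw [hsum] at hgrad
  have hf : f.IsHomogeneous 3 := by
    rw [← hsum, ← mem_homogeneousSubmodule]
    refine Submodule.sum_mem _ fun j _ => Submodule.smul_mem _ _ ?_
    fin_cases j <;> assumption
  have hgradK : ∀ i, eval (φ ∘ v) (pderiv i (map φ f)) = 0 := fun i => by
    rw [pderiv_map, eval_comp_map, hgrad i, map_zero]
  have h3 : (3 : AlgebraicClosure F) ≠ 0 := by
    rw [← map_ofNat φ 3]
    exact (map_ne_zero φ).mpr (Ring.three_ne_zero hchar)
  refine ⟨a, ha0, φ ∘ v, fun hv => by simpa [v] using congrFun hv 0, ?_, hgradK⟩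
  exact (hf.map φ).eval_eq_zero_of_eval_pderiv_eq_zero (by exact_mod_cast h3) hgradK
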